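/- For a fixed sufficiently large integer κ (with n_ν < 2^{κ−10}), the shards of scale j, i.e., the translates of the basic shard R_o^j under the group G_j, form a partition of N: the sets g·R_o^j for g ∈ G_j are pairwise disjoint and their union is all of N. (Case j₂ < j₁, j₃ < j₂: R_o^j = {(z,t) : z ∈ □_j⁺, t ∈ I_{z,j}} with I_{z,j} = (2^{2j₁}f_o(2^{−j₁}z₁), 2^{2j₂}f_o(2^{−j₂}z₂)) + 2^{2j₁+κ}[−1,1) × 2^{2j₂+κ}[−1,1), and G_j = 2^{j}ℤ^{2n} × 2^{2j₁+κ}·2ℤ × 2^{2j₂+κ}·2ℤ.) -/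
import Mathlib


noncomputable section

open Complex MeasureTheory

abbrev Heis (n : ℕ) := (Fin n → ℂ) × ℝ

def Phi {n : ℕ} (z w : Fin n → ℂ) : ℝ :=
  2 * (∑ j, (starRingEnd ℂ) (z j) * w j).im

def Hmul {n : ℕ} (g h : Heis n) : Heis n :=
  (g.1 + h.1, g.2 + h.2 + Phi g.1 h.1)

def Hinv {n : ℕ} (g : Heis n) : Heis n := (-g.1, -g.2)

abbrev Ntilde (n₁ n₂ n₃ : ℕ) := Heis n₁ × Heis n₂ × Heis n₃

def NtildeMul {n₁ n₂ n₃ : ℕ} (g h : Ntilde n₁ n₂ n₃) : Ntilde n₁ n₂ n₃ :=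
  (Hmul g.1 h.1, Hmul g.2.1 h.2.1, Hmul g.2.2 h.2.2)

def NtildeInv {n₁ n₂ n₃ : ℕ} (g : Ntilde n₁ n₂ n₃) : Ntilde n₁ n₂ n₃ :=
  (Hinv g.1, Hinv g.2.1, Hinv g.2.2)

abbrev NGrp (n₁ n₂ n₃ : ℕ) := (Fin n₁ → ℂ) × (Fin n₂ → ℂ) × (Fin n₃ → ℂ) × ℝ × ℝ

def NMul {n₁ n₂ n₃ : ℕ} (g h : NGrp n₁ n₂ n₃) : NGrp n₁ n₂ n₃ :=
  (g.1 + h.1, g.2.1 + h.2.1, g.2.2.1 + h.2.2.1,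
    g.2.2.2.1 + h.2.2.2.1 + Phi g.1 h.1 + Phi g.2.2.1 h.2.2.1,
    g.2.2.2.2 + h.2.2.2.2 + Phi g.2.1 h.2.1 + Phi g.2.2.1 h.2.2.1)

def NInv {n₁ n₂ n₃ : ℕ} (g : NGrp n₁ n₂ n₃) : NGrp n₁ n₂ n₃ :=
  (-g.1, -g.2.1, -g.2.2.1, -g.2.2.2.1, -g.2.2.2.2)

def projPi {n₁ n₂ n₃ : ℕ} (g : Ntilde n₁ n₂ n₃) : NGrp n₁ n₂ n₃ :=
  (g.1.1, g.2.1.1, g.2.2.1, g.1.2 + g.2.2.2, g.2.1.2 + g.2.2.2)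
/-- The symplectic-type form B(y,y') = Σ_l (y'_{2l−1} y_{2l} − y_{2l−1} y'_{2l}),
with ℝ^{2ν} encoded as ν pairs of reals. -/
def Bform {ν : ℕ} (y y' : Fin ν → ℝ × ℝ) : ℝ :=
  ∑ l, ((y' l).1 * (y l).2 - (y l).1 * (y' l).2)

/-- The integer part mod 2, as a real number. -/
def intMod2 (x : ℝ) : ℝ := ((⌊x⌋ % 2 : ℤ) : ℝ)

/-- The m-th term (m ≥ 1 corresponds to index m−1) of the tiling series:
4^{−m} B([2^m y] mod 2, ⟨2^m y⟩). -/
def foTerm {ν : ℕ} (y : Fin ν → ℝ × ℝ) (m : ℕ) : ℝ :=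
  (4 : ℝ)⁻¹ ^ (m + 1) *
    Bform
      (fun l => (intMod2 ((2 : ℝ) ^ (m + 1) * (y l).1),
                 intMod2 ((2 : ℝ) ^ (m + 1) * (y l).2)))
      (fun l => (Int.fract ((2 : ℝ) ^ (m + 1) * (y l).1),
                 Int.fract ((2 : ℝ) ^ (m + 1) * (y l).2)))

/-- The tiling function f_o(y) = Σ_{m≥1} 4^{−m} B([2^m y] mod 2, ⟨2^m y⟩). -/
def fo {ν : ℕ} (y : Fin ν → ℝ × ℝ) : ℝ := ∑' m : ℕ, foTerm y m

/-- Identification of ℂ^n with ν = n pairs of reals. -/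
def toPairs {n : ℕ} (z : Fin n → ℂ) : Fin n → ℝ × ℝ := fun i => ((z i).re, (z i).im)

/-- The positive cube □⁺ = [0,r)^{2n} in ℂ^n ≅ ℝ^{2n}. -/
def BoxPlus (n : ℕ) (r : ℝ) : Set (Fin n → ℂ) :=
  {z | ∀ i, (z i).re ∈ Set.Ico 0 r ∧ (z i).im ∈ Set.Ico 0 r}

/-- The basic shard R_o^j of scale j = (j₁,j₂,j₃) (case j₃ < j₂ < j₁):
R_o^j = {(z,t) : z ∈ □_j⁺, t ∈ I_{z,j}} with
I_{z,j} = (2^{2j₁}f_o(2^{−j₁}z₁), 2^{2j₂}f_o(2^{−j₂}z₂)) + 2^{2j₁+κ}[−1,1) × 2^{2j₂+κ}[−1,1). -/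
def basicShard (n₁ n₂ n₃ : ℕ) (j₁ j₂ j₃ κ : ℤ) : Set (NGrp n₁ n₂ n₃) :=
  {g | g.1 ∈ BoxPlus n₁ ((2 : ℝ) ^ j₁) ∧ g.2.1 ∈ BoxPlus n₂ ((2 : ℝ) ^ j₂) ∧
    g.2.2.1 ∈ BoxPlus n₃ ((2 : ℝ) ^ j₃) ∧
    g.2.2.2.1 - (2 : ℝ) ^ (2 * j₁) * fo (toPairs ((2 : ℝ) ^ (-j₁) • g.1))
      ∈ Set.Ico (-((2 : ℝ) ^ (2 * j₁ + κ))) ((2 : ℝ) ^ (2 * j₁ + κ)) ∧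
    g.2.2.2.2 - (2 : ℝ) ^ (2 * j₂) * fo (toPairs ((2 : ℝ) ^ (-j₂) • g.2.1))
      ∈ Set.Ico (-((2 : ℝ) ^ (2 * j₂ + κ))) ((2 : ℝ) ^ (2 * j₂ + κ))}

/-- The translation group G_j = 2^jℤ^{2n} × 2^{2j₁+κ}·2ℤ × 2^{2j₂+κ}·2ℤ. -/
def latticeGJ (n₁ n₂ n₃ : ℕ) (j₁ j₂ j₃ κ : ℤ) : Set (NGrp n₁ n₂ n₃) :=
  {g | (∀ i, ∃ m : ℤ, (g.1 i).re = (m : ℝ) * 2 ^ j₁) ∧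
       (∀ i, ∃ m : ℤ, (g.1 i).im = (m : ℝ) * 2 ^ j₁) ∧
       (∀ i, ∃ m : ℤ, (g.2.1 i).re = (m : ℝ) * 2 ^ j₂) ∧
       (∀ i, ∃ m : ℤ, (g.2.1 i).im = (m : ℝ) * 2 ^ j₂) ∧
       (∀ i, ∃ m : ℤ, (g.2.2.1 i).re = (m : ℝ) * 2 ^ j₃) ∧
       (∀ i, ∃ m : ℤ, (g.2.2.1 i).im = (m : ℝ) * 2 ^ j₃) ∧
       (∃ m : ℤ, g.2.2.2.1 = 2 * (m : ℝ) * 2 ^ (2 * j₁ + κ)) ∧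
       (∃ m : ℤ, g.2.2.2.2 = 2 * (m : ℝ) * 2 ^ (2 * j₂ + κ))}

lemma tile_unique {r y y' : ℝ} (hy : y ∈ Set.Ico 0 r) (hy' : y' ∈ Set.Ico 0 r)
    {m m' : ℤ} (h : (m : ℝ) * r + y = (m' : ℝ) * r + y') : m = m' ∧ y = y' := by
  have hr : 0 < r := lt_of_le_of_lt hy.1 hy.2
  have hc1 : ((m : ℝ) - (m' : ℝ)) < 1 := by
    nlinarith [hy.1, hy.2, hy'.1, hy'.2]
  have hc2 : (-1 : ℝ) < ((m : ℝ) - (m' : ℝ)) := by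
    nlinarith [hy.1, hy.2, hy'.1, hy'.2]
  have hmm : m = m' := by
    have h1 : (m : ℝ) < (m' : ℝ) + 1 := by linarith
    have h2 : (m' : ℝ) < (m : ℝ) + 1 := by linarith
    have h1' : m < m' + 1 := by exact_mod_cast h1
    have h2' : m' < m + 1 := by exact_mod_cast h2
    omega
  subst hmm
  exact ⟨rfl, by linarith⟩

lemma floor_tile {r : ℝ} (hr : 0 < r) (x : ℝ) :
    x - (⌊x / r⌋ : ℝ) * r ∈ Set.Ico 0 r := by
  have h1 : (⌊x / r⌋ : ℝ) ≤ x / r := Int.floor_le _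
  have h2 : x / r < ⌊x / r⌋ + 1 := Int.lt_floor_add_one _
  have hx : x / r * r = x := div_mul_cancel₀ x hr.ne'
  constructor <;> nlinarith

lemma box_unique {r a a' b b' : ℝ}
    (ha : ∃ m : ℤ, a = (m : ℝ) * r) (ha' : ∃ m : ℤ, a' = (m : ℝ) * r)
    (hb : b ∈ Set.Ico 0 r) (hb' : b' ∈ Set.Ico 0 r)
    (h : a + b = a' + b') : a = a' ∧ b = b' := by
  obtain ⟨m, rfl⟩ := ha; obtain ⟨m', rfl⟩ := ha'
  obtain ⟨h1, h2⟩ := tile_unique hb hb' h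
  exact ⟨by rw [h1], h2⟩

lemma t_unique {A s s' b b' : ℝ}
    (hs : ∃ m : ℤ, s = 2 * (m : ℝ) * A) (hs' : ∃ m : ℤ, s' = 2 * (m : ℝ) * A)
    (hb : b ∈ Set.Ico (-A) A) (hb' : b' ∈ Set.Ico (-A) A)
    (h : s + b = s' + b') : s = s' := by
  obtain ⟨m, rfl⟩ := hs; obtain ⟨m', rfl⟩ := hs'
  have key := tile_unique (r := 2 * A) (y := b + A) (y' := b' + A) (m := m) (m' := m')
    ⟨by linarith [hb.1], by linarith [hb.2]⟩ ⟨by linarith [hb'.1], by linarith [hb'.2]⟩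
    (by linarith)
  rw [key.1]

/-- for κ large enough (n₁, n₂ < 2^{κ−10}) and j₃ < j₂ < j₁,
the left translates g·R_o^j, g ∈ G_j, of the basic shard form a partition of N. -/
theorem shards_partition (n₁ n₂ n₃ : ℕ) (j₁ j₂ j₃ κ : ℤ)
    (hj₂₁ : j₂ < j₁) (hj₃₂ : j₃ < j₂) (hκ : 10 ≤ κ)
    (hn₁ : (n₁ : ℝ) < 2 ^ (κ - 10)) (hn₂ : (n₂ : ℝ) < 2 ^ (κ - 10)) :
    (latticeGJ n₁ n₂ n₃ j₁ j₂ j₃ κ).PairwiseDisjoint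
        (fun g => NMul g '' basicShard n₁ n₂ n₃ j₁ j₂ j₃ κ) ∧
    ⋃ g ∈ latticeGJ n₁ n₂ n₃ j₁ j₂ j₃ κ,
        NMul g '' basicShard n₁ n₂ n₃ j₁ j₂ j₃ κ = Set.univ := by
  constructor
  · -- pairwise disjointness
    intro g hg g' hg' hne
    rw [Function.onFun, Set.disjoint_left]
    rintro p ⟨x, hx, hpx⟩ ⟨x', hx', hpx'⟩
    obtain ⟨w1, w2, w3, s1, s2⟩ := g
    obtain ⟨w1', w2', w3', s1', s2'⟩ := g'
    obtain ⟨z1, z2, z3, t1, t2⟩ := x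
    obtain ⟨z1', z2', z3', t1', t2'⟩ := x'
    simp only [latticeGJ, Set.mem_setOf_eq] at hg hg'
    obtain ⟨hg1re, hg1im, hg2re, hg2im, hg3re, hg3im, hgs1, hgs2⟩ := hg
    obtain ⟨hg1re', hg1im', hg2re', hg2im', hg3re', hg3im', hgs1', hgs2'⟩ := hg'
    simp only [basicShard, BoxPlus, Set.mem_setOf_eq] at hx hx'
    obtain ⟨hx1, hx2, hx3, hxt1, hxt2⟩ := hx
    obtain ⟨hx1', hx2', hx3', hxt1', hxt2'⟩ := hx'
    have heq : NMul (w1, w2, w3, s1, s2) (z1, z2, z3, t1, t2) =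
        NMul (w1', w2', w3', s1', s2') (z1', z2', z3', t1', t2') := hpx.trans hpx'.symm
    simp only [NMul, Prod.mk.injEq] at heq
    obtain ⟨heq1, heq2, heq3, heq4, heq5⟩ := heq
    have key1 : ∀ i, w1 i = w1' i ∧ z1 i = z1' i := by
      intro i
      have h := congrFun heq1 i
      simp only [Pi.add_apply] at h
      obtain ⟨hre1, hre2⟩ := box_unique (hg1re i) (hg1re' i) (hx1 i).1 (hx1' i).1
        (by rw [← Complex.add_re, ← Complex.add_re, h])
      obtain ⟨him1, him2⟩ := box_unique (hg1im i) (hg1im' i) (hx1 i).2 (hx1' i).2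
        (by rw [← Complex.add_im, ← Complex.add_im, h])
      exact ⟨Complex.ext hre1 him1, Complex.ext hre2 him2⟩
    have key2 : ∀ i, w2 i = w2' i ∧ z2 i = z2' i := by
      intro i
      have h := congrFun heq2 i
      simp only [Pi.add_apply] at h
      obtain ⟨hre1, hre2⟩ := box_unique (hg2re i) (hg2re' i) (hx2 i).1 (hx2' i).1
        (by rw [← Complex.add_re, ← Complex.add_re, h])
      obtain ⟨him1, him2⟩ := box_unique (hg2im i) (hg2im' i) (hx2 i).2 (hx2' i).2
        (by rw [← Complex.add_im, ← Complex.add_im, h])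
      exact ⟨Complex.ext hre1 him1, Complex.ext hre2 him2⟩
    have key3 : ∀ i, w3 i = w3' i ∧ z3 i = z3' i := by
      intro i
      have h := congrFun heq3 i
      simp only [Pi.add_apply] at h
      obtain ⟨hre1, hre2⟩ := box_unique (hg3re i) (hg3re' i) (hx3 i).1 (hx3' i).1
        (by rw [← Complex.add_re, ← Complex.add_re, h])
      obtain ⟨him1, him2⟩ := box_unique (hg3im i) (hg3im' i) (hx3 i).2 (hx3' i).2
        (by rw [← Complex.add_im, ← Complex.add_im, h])
      exact ⟨Complex.ext hre1 him1, Complex.ext hre2 him2⟩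
    have hw1 : w1 = w1' := funext fun i => (key1 i).1
    have hz1 : z1 = z1' := funext fun i => (key1 i).2
    have hw2 : w2 = w2' := funext fun i => (key2 i).1
    have hz2 : z2 = z2' := funext fun i => (key2 i).2
    have hw3 : w3 = w3' := funext fun i => (key3 i).1
    have hz3 : z3 = z3' := funext fun i => (key3 i).2
    have hP1 : Phi w1 z1 = Phi w1' z1' := by rw [hw1, hz1]
    have hP2 : Phi w2 z2 = Phi w2' z2' := by rw [hw2, hz2]
    have hP3 : Phi w3 z3 = Phi w3' z3' := by rw [hw3, hz3]
    rw [← hz1] at hxt1'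
    rw [← hz2] at hxt2'
    have hs1 : s1 = s1' := t_unique hgs1 hgs1' hxt1 hxt1' (by linarith)
    have hs2 : s2 = s2' := t_unique hgs2 hgs2' hxt2 hxt2' (by linarith)
    exact hne (by rw [hw1, hw2, hw3, hs1, hs2])
  · -- union is everything
    rw [Set.eq_univ_iff_forall]
    intro p
    obtain ⟨p1, p2, p3, p4, p5⟩ := p
    rw [Set.mem_iUnion₂]
    have hr1 : (0 : ℝ) < 2 ^ j₁ := by positivity
    have hr2 : (0 : ℝ) < 2 ^ j₂ := by positivity
    have hr3 : (0 : ℝ) < 2 ^ j₃ := by positivity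
    have hA1 : (0 : ℝ) < 2 ^ (2 * j₁ + κ) := by positivity
    have hA2 : (0 : ℝ) < 2 ^ (2 * j₂ + κ) := by positivity
    set w1 : Fin n₁ → ℂ := fun i =>
      ⟨(⌊(p1 i).re / 2 ^ j₁⌋ : ℝ) * 2 ^ j₁, (⌊(p1 i).im / 2 ^ j₁⌋ : ℝ) * 2 ^ j₁⟩ with hw1
    set w2 : Fin n₂ → ℂ := fun i =>
      ⟨(⌊(p2 i).re / 2 ^ j₂⌋ : ℝ) * 2 ^ j₂, (⌊(p2 i).im / 2 ^ j₂⌋ : ℝ) * 2 ^ j₂⟩ with hw2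
    set w3 : Fin n₃ → ℂ := fun i =>
      ⟨(⌊(p3 i).re / 2 ^ j₃⌋ : ℝ) * 2 ^ j₃, (⌊(p3 i).im / 2 ^ j₃⌋ : ℝ) * 2 ^ j₃⟩ with hw3
    set z1 : Fin n₁ → ℂ := p1 - w1 with hz1
    set z2 : Fin n₂ → ℂ := p2 - w2 with hz2
    set z3 : Fin n₃ → ℂ := p3 - w3 with hz3
    set c1 : ℝ := (2 : ℝ) ^ (2 * j₁) * fo (toPairs ((2 : ℝ) ^ (-j₁) • z1)) with hc1
    set c2 : ℝ := (2 : ℝ) ^ (2 * j₂) * fo (toPairs ((2 : ℝ) ^ (-j₂) • z2)) with hc2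
    set u1 : ℝ := p4 - Phi w1 z1 - Phi w3 z3 - c1 with hu1
    set u2 : ℝ := p5 - Phi w2 z2 - Phi w3 z3 - c2 with hu2
    have hm1 := floor_tile (by positivity : (0 : ℝ) < 2 * 2 ^ (2 * j₁ + κ))
      (u1 + 2 ^ (2 * j₁ + κ))
    have hm2 := floor_tile (by positivity : (0 : ℝ) < 2 * 2 ^ (2 * j₂ + κ))
      (u2 + 2 ^ (2 * j₂ + κ))
    set m1 : ℤ := ⌊(u1 + 2 ^ (2 * j₁ + κ)) / (2 * 2 ^ (2 * j₁ + κ))⌋ with hm1def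
    set m2 : ℤ := ⌊(u2 + 2 ^ (2 * j₂ + κ)) / (2 * 2 ^ (2 * j₂ + κ))⌋ with hm2def
    set s1 : ℝ := 2 * (m1 : ℝ) * 2 ^ (2 * j₁ + κ) with hs1
    set s2 : ℝ := 2 * (m2 : ℝ) * 2 ^ (2 * j₂ + κ) with hs2
    refine ⟨(w1, w2, w3, s1, s2), ?_, (z1, z2, z3,
      p4 - s1 - Phi w1 z1 - Phi w3 z3, p5 - s2 - Phi w2 z2 - Phi w3 z3), ?_, ?_⟩
    · simp only [latticeGJ, Set.mem_setOf_eq]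
      refine ⟨fun i => ⟨⌊(p1 i).re / 2 ^ j₁⌋, rfl⟩,
        fun i => ⟨⌊(p1 i).im / 2 ^ j₁⌋, rfl⟩,
        fun i => ⟨⌊(p2 i).re / 2 ^ j₂⌋, rfl⟩,
        fun i => ⟨⌊(p2 i).im / 2 ^ j₂⌋, rfl⟩,
        fun i => ⟨⌊(p3 i).re / 2 ^ j₃⌋, rfl⟩,
        fun i => ⟨⌊(p3 i).im / 2 ^ j₃⌋, rfl⟩,
        ⟨m1, hs1⟩, ⟨m2, hs2⟩⟩
    · simp only [basicShard, BoxPlus, Set.mem_setOf_eq]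
      refine ⟨?_, ?_, ?_, ?_, ?_⟩
      · intro i
        rw [hz1, hw1]
        simp only [Pi.sub_apply, Complex.sub_re, Complex.sub_im]
        exact ⟨floor_tile hr1 _, floor_tile hr1 _⟩
      · intro i
        rw [hz2, hw2]
        simp only [Pi.sub_apply, Complex.sub_re, Complex.sub_im]
        exact ⟨floor_tile hr2 _, floor_tile hr2 _⟩
      · intro i
        rw [hz3, hw3]
        simp only [Pi.sub_apply, Complex.sub_re, Complex.sub_im]
        exact ⟨floor_tile hr3 _, floor_tile hr3 _⟩
      · rw [← hc1]
        have hrw : p4 - s1 - Phi w1 z1 - Phi w3 z3 - c1 = u1 - s1 := by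
          rw [hu1]; ring
        rw [hrw, hs1]
        exact ⟨by linarith [hm1.1], by linarith [hm1.2]⟩
      · rw [← hc2]
        have hrw : p5 - s2 - Phi w2 z2 - Phi w3 z3 - c2 = u2 - s2 := by
          rw [hu2]; ring
        rw [hrw, hs2]
        exact ⟨by linarith [hm2.1], by linarith [hm2.2]⟩
    · simp only [NMul, Prod.mk.injEq]
      refine ⟨by rw [hz1]; ring, by rw [hz2]; ring, by rw [hz3]; ring, by ring, by ring⟩
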